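/- arXiv:2605.30679 — 5 statements merged into one kernel-verified Lean document; each statement's English description precedes it below -/
import Mathlib

section
/- Let g : ℝ → ℝ be twice continuously differentiable on an interval containing [ν₁, ν₄], and let ν₁ ≤ ν₂ ≤ ν₃ ≤ ν₄ satisfy the zero-sum condition ν₁ + ν₄ = ν₂ + ν₃. Then g(ν₁) - g(ν₂) - g(ν₃) + g(ν₄) = ∫_{ν₁}^{ν₄} g''(ν) · w(ν) dν, where w(ν) = (ν - ν₁) for ν ∈ [ν₁, ν₂], w(ν) = ν₂ - ν₁ for ν ∈ [ν₂, ν₃], and w(ν) = (ν₄ - ν) for ν ∈ [ν₃, ν₄]. -/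
open Set intervalIntegral

/-- Second-order average integral representation along a zero sum set. -/
theorem stmt_0 (g g' g'' : ℝ → ℝ) (ν₁ ν₂ ν₃ ν₄ : ℝ)
    (h12 : ν₁ ≤ ν₂) (h23 : ν₂ ≤ ν₃) (h34 : ν₃ ≤ ν₄)
    (hsum : ν₁ + ν₄ = ν₂ + ν₃)
    (hg' : ∀ x ∈ Icc ν₁ ν₄, HasDerivAt g (g' x) x)
    (hg'' : ∀ x ∈ Icc ν₁ ν₄, HasDerivAt g' (g'' x) x)
    (hcont : ContinuousOn g'' (Icc ν₁ ν₄)) :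
    g ν₁ - g ν₂ - g ν₃ + g ν₄ =
      ∫ ν in ν₁..ν₄, g'' ν *
        (if ν ≤ ν₂ then ν - ν₁ else if ν ≤ ν₃ then ν₂ - ν₁ else ν₄ - ν) := by
  set f : ℝ → ℝ := fun ν => g'' ν *
    (if ν ≤ ν₂ then ν - ν₁ else if ν ≤ ν₃ then ν₂ - ν₁ else ν₄ - ν) with hf
  have h14 : ν₁ ≤ ν₄ := le_trans h12 (le_trans h23 h34)
  have h13 : ν₁ ≤ ν₃ := le_trans h12 h23
  have h24 : ν₂ ≤ ν₄ := le_trans h23 h34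
  -- pointwise identifications on each subinterval
  have e1 : ∀ x ∈ Icc ν₁ ν₂, f x = g'' x * (x - ν₁) := by
    intro x hx
    simp only [hf, if_pos hx.2]
  have e2 : ∀ x ∈ Icc ν₂ ν₃, f x = g'' x * (ν₂ - ν₁) := by
    intro x hx
    simp only [hf]
    by_cases h : x ≤ ν₂
    · have : x = ν₂ := le_antisymm h hx.1
      rw [if_pos h, this]
    · rw [if_neg h, if_pos hx.2]
  have e3 : ∀ x ∈ Icc ν₃ ν₄, f x = g'' x * (ν₄ - x) := by
    intro x hx
    simp only [hf]
    by_cases h : x ≤ ν₂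
    · have hx2 : x = ν₂ := le_antisymm h (le_trans h23 hx.1)
      have hx3 : x = ν₃ := le_antisymm (hx2 ▸ h23) hx.1
      rw [if_pos h]
      have : x - ν₁ = ν₄ - x := by rw [hx2] at hx3 ⊢; linarith
      rw [this]
    · rw [if_neg h]
      by_cases h' : x ≤ ν₃
      · have hx3 : x = ν₃ := le_antisymm h' hx.1
        rw [if_pos h', hx3]
        have : ν₂ - ν₁ = ν₄ - ν₃ := by linarith
        rw [this]
      · rw [if_neg h']
  -- continuity / integrability on each subinterval
  have sub1 : Icc ν₁ ν₂ ⊆ Icc ν₁ ν₄ := Icc_subset_Icc le_rfl h24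
  have sub2 : Icc ν₂ ν₃ ⊆ Icc ν₁ ν₄ := Icc_subset_Icc h12 h34
  have sub3 : Icc ν₃ ν₄ ⊆ Icc ν₁ ν₄ := Icc_subset_Icc h13 le_rfl
  have c1 : ContinuousOn (fun x => g'' x * (x - ν₁)) (Icc ν₁ ν₂) :=
    (hcont.mono sub1).mul (continuousOn_id.sub continuousOn_const)
  have c2 : ContinuousOn (fun x => g'' x * (ν₂ - ν₁)) (Icc ν₂ ν₃) :=
    (hcont.mono sub2).mul continuousOn_const
  have c3 : ContinuousOn (fun x => g'' x * (ν₄ - x)) (Icc ν₃ ν₄) :=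
    (hcont.mono sub3).mul (continuousOn_const.sub continuousOn_id)
  have if1 : IntervalIntegrable f MeasureTheory.volume ν₁ ν₂ := by
    apply ContinuousOn.intervalIntegrable
    rw [uIcc_of_le h12]
    exact ContinuousOn.congr c1 e1
  have if2 : IntervalIntegrable f MeasureTheory.volume ν₂ ν₃ := by
    apply ContinuousOn.intervalIntegrable
    rw [uIcc_of_le h23]
    exact ContinuousOn.congr c2 e2
  have if3 : IntervalIntegrable f MeasureTheory.volume ν₃ ν₄ := by
    apply ContinuousOn.intervalIntegrable
    rw [uIcc_of_le h34]
    exact ContinuousOn.congr c3 e3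
  -- split the integral
  have split : (∫ ν in ν₁..ν₄, f ν) =
      (∫ ν in ν₁..ν₂, f ν) + (∫ ν in ν₂..ν₃, f ν) + (∫ ν in ν₃..ν₄, f ν) := by
    rw [← integral_add_adjacent_intervals (if1.trans if2) if3,
        ← integral_add_adjacent_intervals if1 if2]
  -- compute each piece
  have I1 : (∫ ν in ν₁..ν₂, f ν) = g' ν₂ * (ν₂ - ν₁) - g ν₂ + g ν₁ := by
    rw [integral_congr (g := fun x => g'' x * (x - ν₁)) (by rwa [uIcc_of_le h12])]
    have := integral_eq_sub_of_hasDerivAt (a := ν₁) (b := ν₂)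
      (f := fun x => g' x * (x - ν₁) - g x) (f' := fun x => g'' x * (x - ν₁))
      (fun x hx => by
        rw [uIcc_of_le h12] at hx
        have hx' := sub1 hx
        have := ((hg'' x hx').mul ((hasDerivAt_id x).sub_const ν₁)).sub (hg' x hx')
        convert this using 1
        · rfl
        simp only [id_eq]; ring)
      (ContinuousOn.intervalIntegrable (by rw [uIcc_of_le h12]; exact c1))
    rw [this]; ring
  have I2 : (∫ ν in ν₂..ν₃, f ν) = (g' ν₃ - g' ν₂) * (ν₂ - ν₁) := by
    rw [integral_congr (g := fun x => g'' x * (ν₂ - ν₁)) (by rwa [uIcc_of_le h23])]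
    have := integral_eq_sub_of_hasDerivAt (a := ν₂) (b := ν₃)
      (f := fun x => g' x * (ν₂ - ν₁)) (f' := fun x => g'' x * (ν₂ - ν₁))
      (fun x hx => by
        rw [uIcc_of_le h23] at hx
        exact (hg'' x (sub2 hx)).mul_const _)
      (ContinuousOn.intervalIntegrable (by rw [uIcc_of_le h23]; exact c2))
    rw [this]; ring
  have I3 : (∫ ν in ν₃..ν₄, f ν) = g ν₄ - g' ν₃ * (ν₄ - ν₃) - g ν₃ := by
    rw [integral_congr (g := fun x => g'' x * (ν₄ - x)) (by rwa [uIcc_of_le h34])]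
    have := integral_eq_sub_of_hasDerivAt (a := ν₃) (b := ν₄)
      (f := fun x => g' x * (ν₄ - x) + g x) (f' := fun x => g'' x * (ν₄ - x))
      (fun x hx => by
        rw [uIcc_of_le h34] at hx
        have hx' := sub3 hx
        have := ((hg'' x hx').mul ((hasDerivAt_const x ν₄).sub (hasDerivAt_id x))).add
          (hg' x hx')
        convert this using 1
        · rfl
        simp only [Pi.sub_apply, id_eq]; ring)
      (ContinuousOn.intervalIntegrable (by rw [uIcc_of_le h34]; exact c3))
    rw [this]; ring
  have hside : ν₂ - ν₁ = ν₄ - ν₃ := by linarith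
  rw [show (∫ ν in ν₁..ν₄, g'' ν *
        (if ν ≤ ν₂ then ν - ν₁ else if ν ≤ ν₃ then ν₂ - ν₁ else ν₄ - ν)) =
      ∫ ν in ν₁..ν₄, f ν from rfl, split, I1, I2, I3]
  linear_combination -g' ν₃ * hside
end

section
/- Let g : ℝ → ℝ be twice continuously differentiable on [ν₁, ν₄], and let ν₁ ≤ ν₂ ≤ ν₃ ≤ ν₄ with ν₁ + ν₄ = ν₂ + ν₃, s := ν₂ - ν₁, b := ν₄ - ν₁. If g'' > 0 on [ν₁, ν₄], then (1/2)·s·b·(min of g'' on [ν₁,ν₄]) ≤ g(ν₁) - g(ν₂) - g(ν₃) + g(ν₄) ≤ s·b·(max of g'' on [ν₁,ν₄]). -/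
open Set

/-- Two-sided bound of the second-order average by side times base times
extremes of the second derivative. -/
theorem stmt_1 (g g' g'' : ℝ → ℝ) (ν₁ ν₂ ν₃ ν₄ : ℝ)
    (h12 : ν₁ ≤ ν₂) (h23 : ν₂ ≤ ν₃) (h34 : ν₃ ≤ ν₄)
    (hsum : ν₁ + ν₄ = ν₂ + ν₃)
    (hg' : ∀ x ∈ Icc ν₁ ν₄, HasDerivAt g (g' x) x)
    (hg'' : ∀ x ∈ Icc ν₁ ν₄, HasDerivAt g' (g'' x) x)
    (hcont : ContinuousOn g'' (Icc ν₁ ν₄))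
    (hpos : ∀ x ∈ Icc ν₁ ν₄, 0 < g'' x) :
    (1 / 2) * (ν₂ - ν₁) * (ν₄ - ν₁) * sInf (g'' '' Icc ν₁ ν₄) ≤
        g ν₁ - g ν₂ - g ν₃ + g ν₄ ∧
      g ν₁ - g ν₂ - g ν₃ + g ν₄ ≤
        (ν₂ - ν₁) * (ν₄ - ν₁) * sSup (g'' '' Icc ν₁ ν₄) := by
  have h14 : ν₁ ≤ ν₄ := le_trans h12 (le_trans h23 h34)
  have hne : (Icc ν₁ ν₄).Nonempty := nonempty_Icc.2 h14
  have hK : IsCompact (g'' '' Icc ν₁ ν₄) := isCompact_Icc.image_of_continuousOn hcont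
  have hKne : (g'' '' Icc ν₁ ν₄).Nonempty := hne.image _
  have hInf_mem := hK.sInf_mem hKne
  have hSup_mem := hK.sSup_mem hKne
  have hInf_le : ∀ x ∈ Icc ν₁ ν₄, sInf (g'' '' Icc ν₁ ν₄) ≤ g'' x := fun x hx =>
    csInf_le hK.bddBelow (mem_image_of_mem _ hx)
  have hle_Sup : ∀ x ∈ Icc ν₁ ν₄, g'' x ≤ sSup (g'' '' Icc ν₁ ν₄) := fun x hx =>
    le_csSup hK.bddAbove (mem_image_of_mem _ hx)
  have hInf_pos : 0 < sInf (g'' '' Icc ν₁ ν₄) := by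
    obtain ⟨x, hx, hxe⟩ := hInf_mem
    exact hxe ▸ hpos x hx
  have hSup_pos : 0 < sSup (g'' '' Icc ν₁ ν₄) := by
    obtain ⟨x, hx, hxe⟩ := hSup_mem
    exact hxe ▸ hpos x hx
  set m := sInf (g'' '' Icc ν₁ ν₄)
  set M := sSup (g'' '' Icc ν₁ ν₄)
  rcases eq_or_lt_of_le h12 with h | h12'
  · -- degenerate: ν₁ = ν₂, hence ν₃ = ν₄
    have h34' : ν₃ = ν₄ := by linarith
    subst h
    rw [h34']
    constructor
    · have : 1 / 2 * (ν₁ - ν₁) * (ν₄ - ν₁) * m = 0 := by ring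
      linarith
    · have : (ν₁ - ν₁) * (ν₄ - ν₁) * M = 0 := by ring
      linarith
  · set c := ν₃ - ν₁ with hc
    have hcpos : 0 < c := by linarith
    have hcb : c ≤ ν₄ - ν₁ := by linarith
    have hcb2 : (ν₄ - ν₁) ≤ 2 * c := by linarith
    -- h(x) = g (x + c) - g x
    set h : ℝ → ℝ := fun x => g (x + c) - g x with hh
    have hsub : ∀ x ∈ Icc ν₁ ν₂, x ∈ Icc ν₁ ν₄ ∧ x + c ∈ Icc ν₁ ν₄ := by
      intro x hx
      constructor
      · exact ⟨hx.1, by linarith [hx.2]⟩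
      · constructor <;> [linarith [hx.1]; linarith [hx.2]]
    have hderiv : ∀ x ∈ Icc ν₁ ν₂, HasDerivAt h (g' (x + c) - g' x) x := by
      intro x hx
      obtain ⟨hx1, hx2⟩ := hsub x hx
      have h1 : HasDerivAt (fun x => g (x + c)) (g' (x + c) * 1) x :=
        (hg' (x + c) hx2).comp x ((hasDerivAt_id x).add_const c)
      have h2 := h1.sub (hg' x hx1)
      simp only [mul_one] at h2
      exact h2
    have hcontg : ContinuousOn h (Icc ν₁ ν₂) := fun x hx =>
      ((hderiv x hx).continuousAt.continuousWithinAt)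
    obtain ⟨ξ, hξ, hξeq⟩ := exists_hasDerivAt_eq_slope h (fun x => g' (x + c) - g' x) h12'
      hcontg (fun x hx => hderiv x (Ioo_subset_Icc_self hx))
    -- MVT on g' over [ξ, ξ + c]
    have hξI := Ioo_subset_Icc_self hξ
    have hξsub : Icc ξ (ξ + c) ⊆ Icc ν₁ ν₄ := by
      apply Icc_subset_Icc
      · exact hξI.1
      · linarith [hξI.2]
    obtain ⟨η, hη, hηeq⟩ := exists_hasDerivAt_eq_slope g' g'' (by linarith : ξ < ξ + c)
      (fun x hx => ((hg'' x (hξsub hx)).continuousAt.continuousWithinAt))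
      (fun x hx => hg'' x (hξsub (Ioo_subset_Icc_self hx)))
    have hηI : η ∈ Icc ν₁ ν₄ := hξsub (Ioo_subset_Icc_self hη)
    have hkey : g ν₁ - g ν₂ - g ν₃ + g ν₄ = g'' η * c * (ν₂ - ν₁) := by
      have e1 : h ν₂ = g ν₄ - g ν₂ := by
        simp only [hh]
        congr 2
        linarith
      have e2 : h ν₁ = g ν₃ - g ν₁ := by
        simp only [hh]
        congr 2
        linarith
      have e3 : g' (ξ + c) - g' ξ = (h ν₂ - h ν₁) / (ν₂ - ν₁) := hξeq
      have e4 : g'' η = (g' (ξ + c) - g' ξ) / (ξ + c - ξ) := hηeq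
      have hne2 : ν₂ - ν₁ ≠ 0 := by linarith
      rw [show ξ + c - ξ = c by ring, eq_div_iff hcpos.ne'] at e4
      field_simp at e3
      rw [e1, e2] at e3
      rw [e4]; linarith
    have hm : m ≤ g'' η := hInf_le η hηI
    have hM : g'' η ≤ M := hle_Sup η hηI
    clear_value m M c
    have hs : (0:ℝ) ≤ ν₂ - ν₁ := by linarith
    constructor
    · rw [hkey]
      nlinarith [mul_nonneg (mul_nonneg hs hInf_pos.le)
          (by linarith : (0:ℝ) ≤ 2 * c - (ν₄ - ν₁)),
        mul_nonneg (mul_nonneg hs hcpos.le) (by linarith : (0:ℝ) ≤ g'' η - m)]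
    · rw [hkey]
      nlinarith [mul_nonneg (mul_nonneg hs hcpos.le) (by linarith : (0:ℝ) ≤ M - g'' η),
        mul_nonneg (mul_nonneg hs hSup_pos.le) (by linarith : (0:ℝ) ≤ (ν₄ - ν₁) - c)]
end

section
/- Fix r > 0 and 0 < ν₂ < ν₃ < r with ν₃ - ν₂ ≥ r - ν₃, i.e. r - ν₂ ≤ 2(ν₃ - ν₂). Then ∂_ν∂_r f(r,ν₂) ≤ (1/√2)·∂_ν∂_r f(r,ν₃), where ∂_ν∂_r f(r,ν) = ν/(r√(r²-ν²)). -/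
/-- Comparison of mixed partials `∂_ν∂_r f(r,ν) = ν/(r√(r²-ν²))` at `ν₂` and `ν₃`
when `ν₃ - ν₂ ≥ r - ν₃`. -/
theorem stmt_7 (r ν₂ ν₃ : ℝ) (hr : 0 < r) (h2 : 0 < ν₂) (h23 : ν₂ < ν₃) (h3 : ν₃ < r)
    (hgap : r - ν₃ ≤ ν₃ - ν₂) :
    ν₂ / (r * Real.sqrt (r + ν₂) * Real.sqrt (r - ν₂)) ≤
      (1 / Real.sqrt 2) * (ν₃ / (r * Real.sqrt (r + ν₃) * Real.sqrt (r - ν₃))) := by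
  have h2r : ν₂ < r := h23.trans h3
  set a := Real.sqrt (r + ν₂) with ha
  set b := Real.sqrt (r - ν₂) with hb
  set c := Real.sqrt (r + ν₃) with hc
  set d := Real.sqrt (r - ν₃) with hd
  set s := Real.sqrt 2 with hs
  have hap : 0 < a := Real.sqrt_pos.2 (by linarith)
  have hbp : 0 < b := Real.sqrt_pos.2 (by linarith)
  have hcp : 0 < c := Real.sqrt_pos.2 (by linarith)
  have hdp : 0 < d := Real.sqrt_pos.2 (by linarith)
  have hsp : 0 < s := Real.sqrt_pos.2 (by norm_num)
  have ha2 : a ^ 2 = r + ν₂ := Real.sq_sqrt (by linarith)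
  have hb2 : b ^ 2 = r - ν₂ := Real.sq_sqrt (by linarith)
  have hc2 : c ^ 2 = r + ν₃ := Real.sq_sqrt (by linarith)
  have hd2 : d ^ 2 = r - ν₃ := Real.sq_sqrt (by linarith)
  have hs2 : s ^ 2 = 2 := Real.sq_sqrt (by norm_num)
  -- b ≥ s * d
  have hbd : s * d ≤ b := by
    have hsq : (s * d) ^ 2 ≤ b ^ 2 := by
      rw [mul_pow, hs2, hd2, hb2]; linarith
    nlinarith [mul_pos hsp hdp]
  -- ν₂ * c ≤ ν₃ * a
  have hca : ν₂ * c ≤ ν₃ * a := by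
    have hsq : (ν₂ * c) ^ 2 ≤ (ν₃ * a) ^ 2 := by
      rw [mul_pow, mul_pow, hc2, ha2]
      nlinarith [mul_pos (sub_pos.2 h23) hr, mul_pos (mul_pos h2 (h2.trans h23)) (sub_pos.2 h23)]
    nlinarith [mul_pos h2 hcp, mul_pos (h2.trans h23) hap]
  rw [one_div, inv_mul_eq_div, div_div, div_le_div_iff₀ (by positivity) (by positivity)]
  have key : ν₂ * (s * d) * c ≤ ν₃ * b * a := by
    calc ν₂ * (s * d) * c = (ν₂ * c) * (s * d) := by ring
    _ ≤ (ν₃ * a) * b := by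
        apply mul_le_mul hca hbd (mul_pos hsp hdp).le (mul_pos (h2.trans h23) hap).le
    _ = ν₃ * b * a := by ring
  nlinarith [key, hr.le, mul_pos hsp (mul_pos hcp hdp)]
end

section
/- Fix 0 < r and μ with μ > r. Define φ(α) := (μ/r)·α - sin α on ℝ. Then φ'(α) = μ/r - cos α ≥ (μ - r)/r > 0 for all α, and moreover |φ''(α)| ≤ C·max(1, ((μ-r)/r)^{-1/2})·φ'(α) for an absolute constant C, uniformly in α ∈ [-π, π]. -/
open Real Set

/-- Nonstationarity of the Bessel phase in the classically forbidden region. -/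
theorem stmt_12 :
    ∃ C > 0, ∀ r μ : ℝ, 0 < r → r < μ →
      (∀ α : ℝ,
        HasDerivAt (fun a : ℝ => (μ / r) * a - Real.sin a) (μ / r - Real.cos α) α ∧
        (μ - r) / r ≤ μ / r - Real.cos α ∧ 0 < (μ - r) / r) ∧
      ∀ α ∈ Icc (-π) π,
        |Real.sin α| ≤
          C * max 1 (((μ - r) / r) ^ (-(1 / 2) : ℝ)) * (μ / r - Real.cos α) := by
  refine ⟨2, by norm_num, fun r μ hr hrμ => ?_⟩
  have hε : 0 < (μ - r) / r := div_pos (by linarith) hr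
  have hkey : μ / r - (μ - r) / r = 1 := by field_simp; ring
  constructor
  · intro α
    refine ⟨?_, ?_, hε⟩
    · have h := ((hasDerivAt_id α).const_mul (μ / r)).sub (Real.hasDerivAt_sin α)
      simp only [mul_one] at h; exact h
    · have := Real.cos_le_one α
      linarith
  · intro α _
    set ε := (μ - r) / r with hεdef
    have hx : μ / r - Real.cos α = ε + (1 - Real.cos α) := by
      rw [hεdef]; linarith
    set x := 1 - Real.cos α with hxdef
    have hx0 : 0 ≤ x := by have := Real.cos_le_one α; linarith
    have hs2 : (Real.sin α) ^ 2 ≤ 2 * x := by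
      have hc := Real.neg_one_le_cos α
      nlinarith [Real.sin_sq_add_cos_sq α]
    have habs : |Real.sin α| ^ 2 ≤ 2 * x := by rwa [sq_abs]
    have hsnn : 0 ≤ |Real.sin α| := abs_nonneg _
    have hrpow : ε ^ (-(1 / 2) : ℝ) = (Real.sqrt ε)⁻¹ := by
      rw [Real.rpow_neg hε.le, ← Real.sqrt_eq_rpow]
    rw [hx, hrpow]
    rcases le_total ε 1 with h1 | h1
    · have hle1 : (1 : ℝ) ≤ (Real.sqrt ε)⁻¹ := by
        rw [le_inv_comm₀ one_pos (Real.sqrt_pos.mpr hε)]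
        simpa using Real.sqrt_le_sqrt h1
      have hm : max 1 (Real.sqrt ε)⁻¹ = (Real.sqrt ε)⁻¹ := max_eq_right hle1
      rw [hm]
      have hsq : 0 < Real.sqrt ε := Real.sqrt_pos.mpr hε
      have hεeq : Real.sqrt ε ^ 2 = ε := Real.sq_sqrt hε.le
      rw [show (2 : ℝ) * (Real.sqrt ε)⁻¹ * (ε + x) = 2 * (ε + x) / Real.sqrt ε by ring,
        le_div_iff₀ hsq]
      nlinarith [sq_nonneg (ε - x), sq_nonneg (|Real.sin α| * Real.sqrt ε - 2 * (ε + x)),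
        mul_nonneg hε.le hx0, mul_nonneg hsnn hsq.le]
    · have hs1 : |Real.sin α| ≤ 1 := by
        have := Real.neg_one_le_sin α; have := Real.sin_le_one α
        rw [abs_le]; constructor <;> linarith
      have hmax : (1 : ℝ) ≤ max 1 (Real.sqrt ε)⁻¹ := le_max_left _ _
      have h2 : (1 : ℝ) ≤ ε + x := by linarith
      nlinarith
end

section
/- Let c > 0, λ > 0, and let s₁ < s₂ < ... be an increasing sequence of positive reals, with b : ℝ → ℝ nondecreasing positive, satisfying: s₁·b(s₁) ≥ c·λ, and for all i < j, if (s_j - s_i)·b(s_i) ≥ c·λδ then (s_j - s_i)·b(s_i) ≥ c·λ. Define clusters greedily: i₁ = 1, and i_{l+1} is the least index with (s_{i_{l+1}} - s_{i_l})·b(s_{i_l}) > c·λδ. Then for every l ≥ 1, s_{i_l}·b(s_{i_l}) ≥ c·l·λ. -/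
/-- Inductive cluster bound: along greedily chosen cluster representatives,
`s·b(s)` grows at least linearly, `s_{i_l}·b(s_{i_l}) ≥ c·l·λ`. -/
theorem stmt_16 (c lam δ : ℝ) (hc : 0 < c) (hlam : 0 < lam) (hδ : 0 ≤ δ)
    (s : ℕ → ℝ) (hs : StrictMono s) (hspos : ∀ i, 0 < s i)
    (b : ℝ → ℝ) (hb : Monotone b) (hbpos : ∀ x, 0 < b x)
    (hfirst : c * lam ≤ s 1 * b (s 1))
    (hdich : ∀ i j : ℕ, i < j →
      c * lam * δ ≤ (s j - s i) * b (s i) → c * lam ≤ (s j - s i) * b (s i))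
    (idx : ℕ → ℕ) (hidx1 : idx 1 = 1) (hidxmono : StrictMonoOn idx (Set.Ici 1))
    (hjump : ∀ l : ℕ, 1 ≤ l →
      c * lam * δ < (s (idx (l + 1)) - s (idx l)) * b (s (idx l))) :
    ∀ l : ℕ, 1 ≤ l → c * l * lam ≤ s (idx l) * b (s (idx l)) := by
  intro l hl
  induction l with
  | zero => omega
  | succ n ih =>
    rcases Nat.eq_or_lt_of_le hl with h1 | h1
    · simp [← h1, hidx1]
      simpa using hfirst
    · have hn : 1 ≤ n := by omega
      have hih := ih hn
      have hlt : idx n < idx (n + 1) := hidxmono hn (by omega : (1:ℕ) ≤ n + 1) (by omega)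
      have hgap : c * lam ≤ (s (idx (n + 1)) - s (idx n)) * b (s (idx n)) :=
        hdich _ _ hlt (le_of_lt (hjump n hn))
      have hbmono : b (s (idx n)) ≤ b (s (idx (n + 1))) := hb (le_of_lt (hs hlt))
      have key : s (idx (n + 1)) * b (s (idx n)) ≤ s (idx (n + 1)) * b (s (idx (n + 1))) :=
        mul_le_mul_of_nonneg_left hbmono (le_of_lt (hspos _))
      have : c * (n + 1) * lam ≤ (s (idx (n + 1)) - s (idx n)) * b (s (idx n))
          + s (idx n) * b (s (idx n)) := by push_cast; nlinarith
      have heq : (s (idx (n + 1)) - s (idx n)) * b (s (idx n))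
          + s (idx n) * b (s (idx n)) = s (idx (n + 1)) * b (s (idx n)) := by ring
      push_cast
      linarith
end
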